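/- Let r₁, r₂ ≥ 1, let α be a partition with at most r₁ parts and β a partition with at most r₂ parts. Then for all real q with 0 < q < 1 and all real Q > 0: W_{(α,β)}(q,Q) = Σ W_{(γ,η)}(q,Q), where the sum runs over all pairs of partitions (γ,η) obtained from (α,β) by adding exactly one box (i.e., either γ ⊃ α with |γ| = |α|+1 and η = β, or γ = α and η ⊃ β with |η| = |β|+1) such that γ has at most r₁ parts and η has at most r₂ parts. -/

import Mathlib

open Finset

/-- `n(α) = Σ_{i=1}^{r} (i−1) α_i` for a partition `α` with at most `r` parts,
given as a function `ℕ → ℕ` with the parts indexed `α 1, α 2, …` (1-based). -/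
def nStat (r : ℕ) (α : ℕ → ℕ) : ℕ := ∑ i ∈ Icc 1 r, (i - 1) * α i

/-- `|α| = Σ_{i=1}^{r} α_i`, the size of a partition with at most `r` parts. -/
def sizeP (r : ℕ) (α : ℕ → ℕ) : ℕ := ∑ i ∈ Icc 1 r, α i

/-- The principal specialization of the Schur function, given by the product formula
`s_α(1,q,…,q^{r−1}) = q^{n(α)} ∏_{1≤i<j≤r} (1−q^{α_i−α_j+j−i})/(1−q^{j−i})`. -/
noncomputable def principalSchur (r : ℕ) (α : ℕ → ℕ) (q : ℝ) : ℝ :=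
  q ^ nStat r α *
    ∏ i ∈ Icc 1 r, ∏ j ∈ Icc 1 r,
      if i < j then (1 - q ^ ((α i : ℤ) - (α j : ℤ) + (j : ℤ) - (i : ℤ))) /
        (1 - q ^ ((j : ℤ) - (i : ℤ))) else 1

/-- The normalized Schur function
`s_{α,r}(q) = s_α(1,q,…,q^{r−1}) / s_{[1]}(1,q,…,q^{r−1})^{|α|}`, where
`s_{[1]}(1,q,…,q^{r−1}) = (1−q^r)/(1−q)`. -/
noncomputable def normSchur (r : ℕ) (α : ℕ → ℕ) (q : ℝ) : ℝ :=
  principalSchur r α q / ((1 - q ^ r) / (1 - q)) ^ sizeP r α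

/-- The weight function `W_{(α,β)}(q,Q)` for a pair of partitions `α` (at most `r₁`
parts) and `β` (at most `r₂` parts), both 1-based and padded with zeros:
`W_{(α,β)}(q,Q) = q^{n(α)+n(β)} ((1−q)/(1−q^r))^{|α|+|β|}
  ∏_{1≤i<j≤r₁}(1−q^{α_i−α_j+j−i})/(1−q^{j−i}) ·
  ∏_{1≤i<j≤r₂}(1−q^{β_i−β_j+j−i})/(1−q^{j−i}) ·
  ∏_{i=1}^{r₁}∏_{j=1}^{r₂} (Q q^{α_i−i} + q^{β_j−j})/(Q q^{−i} + q^{−j})`,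
with `r = r₁ + r₂`. -/
noncomputable def weightW (r₁ r₂ : ℕ) (α β : ℕ → ℕ) (q Q : ℝ) : ℝ :=
  q ^ (nStat r₁ α + nStat r₂ β) *
    ((1 - q) / (1 - q ^ (r₁ + r₂))) ^ (sizeP r₁ α + sizeP r₂ β) *
    (∏ i ∈ Icc 1 r₁, ∏ j ∈ Icc 1 r₁,
      if i < j then (1 - q ^ ((α i : ℤ) - (α j : ℤ) + (j : ℤ) - (i : ℤ))) /
        (1 - q ^ ((j : ℤ) - (i : ℤ))) else 1) *
    (∏ i ∈ Icc 1 r₂, ∏ j ∈ Icc 1 r₂,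
      if i < j then (1 - q ^ ((β i : ℤ) - (β j : ℤ) + (j : ℤ) - (i : ℤ))) /
        (1 - q ^ ((j : ℤ) - (i : ℤ))) else 1) *
    ∏ i ∈ Icc 1 r₁, ∏ j ∈ Icc 1 r₂,
      (Q * q ^ ((α i : ℤ) - (i : ℤ)) + q ^ ((β j : ℤ) - (j : ℤ))) /
        (Q * q ^ (-(i : ℤ)) + q ^ (-(j : ℤ)))

lemma pf_master (q : ℝ) (t : ℕ → ℝ) :
    ∀ (s : Finset ℕ), Set.InjOn t s → ∀ x : ℝ, (∀ m ∈ s, x ≠ t m) →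
    ∏ j ∈ s, (q * x - t j) / (x - t j) =
      q ^ s.card + ∑ m ∈ s,
        ((q - 1) * t m * ∏ j ∈ s.erase m, (q * t m - t j) / (t m - t j)) / (x - t m) := by
  intro s
  induction s using Finset.induction_on with
  | empty => intro _ x _; simp
  | @insert a s ha ih =>
    intro hinj x hx
    have hsub : (s : Set ℕ) ⊆ (insert a s : Finset ℕ) := by
      intro y hy; simp at hy ⊢; tauto
    have hinj' : Set.InjOn t s := hinj.mono hsub
    have hta : ∀ m ∈ s, t a ≠ t m := by
      intro m hm h
      exact ha (by
        have : a = m := hinj (by simp) (by simp [hm]) h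
        rwa [this])
    have hxa : x ≠ t a := hx a (by simp)
    have hxs : ∀ m ∈ s, x ≠ t m := fun m hm => hx m (by simp [hm])
    have IHx := ih hinj' x hxs
    have IHa := ih hinj' (t a) hta
    have h1 : x - t a ≠ 0 := sub_ne_zero.mpr hxa
    rw [Finset.prod_insert ha, IHx, Finset.card_insert_of_notMem ha,
      Finset.sum_insert ha, Finset.erase_insert ha, IHa, mul_add, Finset.mul_sum]
    have herase : ∀ m ∈ s, (insert a s).erase m = insert a (s.erase m) := by
      intro m hm
      rw [Finset.erase_insert_of_ne]
      intro h; exact ha (h ▸ hm)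
    have h2 : ∀ m ∈ s,
        (q * x - t a) / (x - t a) *
            (((q - 1) * t m * ∏ j ∈ s.erase m, (q * t m - t j) / (t m - t j)) / (x - t m))
        = ((q - 1) * t a / (x - t a)) *
            (((q - 1) * t m * ∏ j ∈ s.erase m, (q * t m - t j) / (t m - t j)) / (t a - t m)) +
          ((q - 1) * t m * ∏ j ∈ (insert a s).erase m, (q * t m - t j) / (t m - t j)) / (x - t m) := by
      intro m hm
      rw [herase m hm, Finset.prod_insert (fun h => ha (Finset.mem_of_mem_erase h))]
      set A := ∏ j ∈ s.erase m, (q * t m - t j) / (t m - t j) with hA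
      have h2 : x - t m ≠ 0 := sub_ne_zero.mpr (hxs m hm)
      have h3 : t a - t m ≠ 0 := sub_ne_zero.mpr (hta m hm)
      have h4 : t m - t a ≠ 0 := sub_ne_zero.mpr (fun h => (hta m hm) h.symm)
      field_simp
      ring
    rw [Finset.sum_congr rfl h2, Finset.sum_add_distrib, ← Finset.mul_sum]
    set Sa := ∑ m ∈ s, ((q - 1) * t m * ∏ j ∈ s.erase m, (q * t m - t j) / (t m - t j)) / (t a - t m)
    set P2 := ∑ m ∈ s, ((q - 1) * t m * ∏ j ∈ (insert a s).erase m, (q * t m - t j) / (t m - t j)) / (x - t m)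
    field_simp
    ring

lemma sum_prod_ratio (q : ℝ) (hq : q ≠ 1) (t : ℕ → ℝ) (s : Finset ℕ)
    (hinj : Set.InjOn t s) (h0 : ∀ m ∈ s, t m ≠ 0) :
    ∑ m ∈ s, ∏ j ∈ s.erase m, (q * t m - t j) / (t m - t j) =
      (1 - q ^ s.card) / (1 - q) := by
  have hx : ∀ m ∈ s, (0:ℝ) ≠ t m := fun m hm => (h0 m hm).symm
  have H := pf_master q t s hinj 0 hx
  have hL : ∏ j ∈ s, (q * 0 - t j) / (0 - t j) = 1 := by
    apply Finset.prod_eq_one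
    intro j hj
    rw [mul_zero, zero_sub]
    rw [neg_div_neg_eq, div_self (h0 j hj)]
  have hR : ∀ m ∈ s,
      ((q - 1) * t m * ∏ j ∈ s.erase m, (q * t m - t j) / (t m - t j)) / (0 - t m)
      = (q - 1) * -(∏ j ∈ s.erase m, (q * t m - t j) / (t m - t j)) := by
    intro m hm
    rw [zero_sub, div_neg, mul_comm (q - 1) (t m), mul_assoc,
      mul_div_cancel_left₀ _ (h0 m hm)]
    ring
  rw [hL, Finset.sum_congr rfl hR, ← Finset.mul_sum, Finset.sum_neg_distrib] at H
  have hq1 : (1:ℝ) - q ≠ 0 := sub_ne_zero.mpr (fun h => hq h.symm)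
  rw [eq_div_iff hq1]
  linear_combination -H

noncomputable def pairProd (s : Finset ℕ) (T : ℕ → ℝ) : ℝ :=
  ∏ i ∈ s, ∏ j ∈ s, if i < j then T i - T j else 1

lemma pairProd_expand (s : Finset ℕ) (T : ℕ → ℝ) (m : ℕ) (hm : m ∈ s) (x : ℝ) :
    pairProd s (Function.update T m x) =
      (∏ j ∈ s.erase m,
        (if m < j then x - T j else 1) * (if j < m then T j - x else 1)) *
      ∏ i ∈ s.erase m, ∏ j ∈ s.erase m, (if i < j then T i - T j else 1) := by
  unfold pairProd
  set U := Function.update T m x with hU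
  have hUm : U m = x := Function.update_self m x T
  have hUj : ∀ j, j ≠ m → U j = T j := fun j hj => Function.update_of_ne hj x T
  rw [← Finset.mul_prod_erase s _ hm]
  have h1 : ∏ j ∈ s, (if m < j then U m - U j else 1)
      = ∏ j ∈ s.erase m, (if m < j then x - T j else 1) := by
    rw [← Finset.mul_prod_erase s _ hm, if_neg (lt_irrefl m), one_mul]
    apply Finset.prod_congr rfl
    intro j hj
    have hjm : j ≠ m := Finset.ne_of_mem_erase hj
    rw [hUm, hUj j hjm]
  have h2 : ∏ i ∈ s.erase m, ∏ j ∈ s, (if i < j then U i - U j else 1)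
      = (∏ j ∈ s.erase m, (if j < m then T j - x else 1)) *
        ∏ i ∈ s.erase m, ∏ j ∈ s.erase m, (if i < j then T i - T j else 1) := by
    rw [← Finset.prod_mul_distrib]
    apply Finset.prod_congr rfl
    intro i hi
    have him : i ≠ m := Finset.ne_of_mem_erase hi
    rw [← Finset.mul_prod_erase s _ hm, hUj i him, hUm]
    congr 1
    apply Finset.prod_congr rfl
    intro j hj
    rw [hUj j (Finset.ne_of_mem_erase hj)]
  rw [h1, h2, ← mul_assoc, ← Finset.prod_mul_distrib]

lemma pairProd_update_mul (s : Finset ℕ) (T : ℕ → ℝ) (m : ℕ) (hm : m ∈ s) (x : ℝ) :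
    pairProd s (Function.update T m x) * ∏ j ∈ s.erase m, (T m - T j) =
      pairProd s T * ∏ j ∈ s.erase m, (x - T j) := by
  have hT : pairProd s T = pairProd s (Function.update T m (T m)) := by
    rw [Function.update_eq_self]
  rw [hT, pairProd_expand s T m hm x, pairProd_expand s T m hm (T m)]
  set K := ∏ i ∈ s.erase m, ∏ j ∈ s.erase m, (if i < j then T i - T j else 1) with hK
  have key : (∏ j ∈ s.erase m,
        (if m < j then x - T j else 1) * (if j < m then T j - x else 1)) *
        ∏ j ∈ s.erase m, (T m - T j)
      = (∏ j ∈ s.erase m,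
        (if m < j then T m - T j else 1) * (if j < m then T j - T m else 1)) *
        ∏ j ∈ s.erase m, (x - T j) := by
    rw [← Finset.prod_mul_distrib, ← Finset.prod_mul_distrib]
    apply Finset.prod_congr rfl
    intro j hj
    have hjm : j ≠ m := Finset.ne_of_mem_erase hj
    rcases lt_or_gt_of_ne hjm with h | h
    · rw [if_neg (by omega), if_pos h, if_neg (by omega), if_pos h]
      ring
    · rw [if_pos h, if_neg (by omega), if_pos h, if_neg (by omega)]
      ring
  linear_combination K * key

lemma pairProd_update_div (s : Finset ℕ) (T : ℕ → ℝ) (m : ℕ) (hm : m ∈ s) (x : ℝ)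
    (hinj : Set.InjOn T s) :
    pairProd s (Function.update T m x) =
      (∏ j ∈ s.erase m, (x - T j) / (T m - T j)) * pairProd s T := by
  have hne : ∀ j ∈ s.erase m, T m - T j ≠ 0 := by
    intro j hj
    have hjm : j ≠ m := Finset.ne_of_mem_erase hj
    have hjs : j ∈ s := Finset.mem_of_mem_erase hj
    exact sub_ne_zero.mpr (fun h => hjm (hinj hjs hm h.symm))
  have hD : ∏ j ∈ s.erase m, (T m - T j) ≠ 0 := Finset.prod_ne_zero_iff.mpr hne
  rw [Finset.prod_div_distrib]
  field_simp
  rw [pairProd_update_mul s T m hm x]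
  ring

lemma one_sub_zpow_ne (q : ℝ) (hq0 : 0 < q) (hq1 : q < 1) {i j : ℕ} (hij : i < j) :
    1 - q ^ ((j : ℤ) - (i : ℤ)) ≠ 0 := by
  have h : (j : ℤ) - (i : ℤ) = ((j - i : ℕ) : ℤ) := by omega
  rw [h, zpow_natCast]
  have : q ^ (j - i) < 1 := pow_lt_one₀ hq0.le hq1 (by omega)
  linarith

lemma Lpt (q c : ℝ) (hq0 : 0 < q) (hq1 : q < 1) {i j : ℕ} (hij : i < j) (a b : ℕ) :
    c * q ^ ((a : ℤ) - (i : ℤ)) - c * q ^ ((b : ℤ) - (j : ℤ)) =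
      q ^ (b : ℕ) * ((1 - q ^ ((a : ℤ) - (b : ℤ) + (j : ℤ) - (i : ℤ))) /
        (1 - q ^ ((j : ℤ) - (i : ℤ)))) * (c * q ^ (-(i : ℤ)) - c * q ^ (-(j : ℤ))) := by
  have hq : q ≠ 0 := hq0.ne'
  have hden := one_sub_zpow_ne q hq0 hq1 hij
  have key : (c * q ^ ((a : ℤ) - (i : ℤ)) - c * q ^ ((b : ℤ) - (j : ℤ))) *
      (1 - q ^ ((j : ℤ) - (i : ℤ))) =
      q ^ (b : ℕ) * (1 - q ^ ((a : ℤ) - (b : ℤ) + (j : ℤ) - (i : ℤ))) *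
        (c * q ^ (-(i : ℤ)) - c * q ^ (-(j : ℤ))) := by
    simp only [zpow_sub₀ hq, zpow_add₀ hq, zpow_natCast, zpow_neg]
    field_simp
    ring
  rw [← mul_div_assoc, div_mul_eq_mul_div, eq_div_iff hden]
  linear_combination key

lemma prod_ite_lt_pow (r : ℕ) (α : ℕ → ℕ) (q : ℝ) :
    ∏ i ∈ Icc 1 r, ∏ j ∈ Icc 1 r, (if i < j then q ^ (α j) else 1) = q ^ nStat r α := by
  rw [Finset.prod_comm]
  have h1 : ∀ j ∈ Icc 1 r, ∏ i ∈ Icc 1 r, (if i < j then q ^ (α j) else 1)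
      = q ^ ((j - 1) * α j) := by
    intro j hj
    simp only [Finset.mem_Icc] at hj
    rw [Finset.prod_ite, Finset.prod_const, Finset.prod_const_one, mul_one]
    have hf : Finset.filter (fun i => i < j) (Icc 1 r) = Icc 1 (j - 1) := by
      ext i; simp [Finset.mem_Icc, Finset.mem_filter]; omega
    rw [hf, Nat.card_Icc, ← pow_mul]
    congr 1
    simp [Nat.mul_comm]
  rw [Finset.prod_congr rfl h1, Finset.prod_pow_eq_pow_sum]
  rfl

lemma pairProd_congr (s : Finset ℕ) (T U : ℕ → ℝ) (h : ∀ m ∈ s, T m = U m) :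
    pairProd s T = pairProd s U := by
  unfold pairProd
  apply Finset.prod_congr rfl
  intro i hi
  apply Finset.prod_congr rfl
  intro j hj
  rw [h i hi, h j hj]

lemma block_lemma (r : ℕ) (γ : ℕ → ℕ) (q c : ℝ) (hq0 : 0 < q) (hq1 : q < 1) :
    pairProd (Icc 1 r) (fun m => c * q ^ ((γ m : ℤ) - (m : ℤ))) =
      q ^ nStat r γ *
      (∏ i ∈ Icc 1 r, ∏ j ∈ Icc 1 r,
        if i < j then (1 - q ^ ((γ i : ℤ) - (γ j : ℤ) + (j : ℤ) - (i : ℤ))) /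
          (1 - q ^ ((j : ℤ) - (i : ℤ))) else 1) *
      pairProd (Icc 1 r) (fun m => c * q ^ (-(m : ℤ))) := by
  unfold pairProd
  rw [← prod_ite_lt_pow r γ q, ← Finset.prod_mul_distrib, ← Finset.prod_mul_distrib]
  apply Finset.prod_congr rfl
  intro i _
  rw [← Finset.prod_mul_distrib, ← Finset.prod_mul_distrib]
  apply Finset.prod_congr rfl
  intro j _
  by_cases hij : i < j
  · simp only [if_pos hij]
    exact Lpt q c hq0 hq1 hij (γ i) (γ j)
  · simp [if_neg hij]

lemma prod_shift (c n : ℕ) (f : ℕ → ℝ) :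
    ∏ j ∈ Icc (c + 1) (c + n), f j = ∏ j ∈ Icc 1 n, f (c + j) := by
  rw [← Finset.map_add_left_Icc, Finset.prod_map]
  rfl

lemma sum_shift (c n : ℕ) (f : ℕ → ℝ) :
    ∑ j ∈ Icc (c + 1) (c + n), f j = ∑ j ∈ Icc 1 n, f (c + j) := by
  rw [← Finset.map_add_left_Icc, Finset.sum_map]
  rfl

lemma pairProd_shift (c n : ℕ) (T : ℕ → ℝ) :
    pairProd (Icc (c + 1) (c + n)) T = pairProd (Icc 1 n) (fun m => T (c + m)) := by
  unfold pairProd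
  rw [prod_shift]
  apply Finset.prod_congr rfl
  intro i _
  rw [prod_shift]
  apply Finset.prod_congr rfl
  intro j _
  congr 1
  simp [Nat.add_lt_add_iff_left]

lemma Icc_split (r₁ r₂ : ℕ) : Icc 1 (r₁ + r₂) = Icc 1 r₁ ∪ Icc (r₁ + 1) (r₁ + r₂) := by
  ext i; simp only [Finset.mem_Icc, Finset.mem_union]; omega

lemma Icc_disj (r₁ r₂ : ℕ) : Disjoint (Icc 1 r₁) (Icc (r₁ + 1) (r₁ + r₂)) := by
  rw [Finset.disjoint_left]
  intro a ha hb
  simp only [Finset.mem_Icc] at ha hb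
  omega

lemma pairProd_split (r₁ r₂ : ℕ) (T : ℕ → ℝ) :
    pairProd (Icc 1 (r₁ + r₂)) T =
      pairProd (Icc 1 r₁) T * pairProd (Icc (r₁ + 1) (r₁ + r₂)) T *
      ∏ i ∈ Icc 1 r₁, ∏ j ∈ Icc (r₁ + 1) (r₁ + r₂), (T i - T j) := by
  unfold pairProd
  rw [Icc_split r₁ r₂, Finset.prod_union (Icc_disj r₁ r₂)]
  have hinner : ∀ i : ℕ, ∏ j ∈ Icc 1 r₁ ∪ Icc (r₁ + 1) (r₁ + r₂),
      (if i < j then T i - T j else 1) =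
      (∏ j ∈ Icc 1 r₁, if i < j then T i - T j else 1) *
      ∏ j ∈ Icc (r₁ + 1) (r₁ + r₂), (if i < j then T i - T j else 1) :=
    fun i => Finset.prod_union (Icc_disj r₁ r₂)
  rw [Finset.prod_congr rfl (fun i _ => hinner i), Finset.prod_congr rfl (fun i _ => hinner i),
    Finset.prod_mul_distrib, Finset.prod_mul_distrib]
  have h1 : ∏ i ∈ Icc (r₁ + 1) (r₁ + r₂), ∏ j ∈ Icc 1 r₁, (if i < j then T i - T j else 1) = 1 := by
    apply Finset.prod_eq_one
    intro i hi
    apply Finset.prod_eq_one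
    intro j hj
    simp only [Finset.mem_Icc] at hi hj
    rw [if_neg (by omega)]
  have h2 : ∏ i ∈ Icc 1 r₁, ∏ j ∈ Icc (r₁ + 1) (r₁ + r₂), (if i < j then T i - T j else 1)
      = ∏ i ∈ Icc 1 r₁, ∏ j ∈ Icc (r₁ + 1) (r₁ + r₂), (T i - T j) := by
    apply Finset.prod_congr rfl
    intro i hi
    apply Finset.prod_congr rfl
    intro j hj
    simp only [Finset.mem_Icc] at hi hj
    rw [if_pos (by omega)]
  rw [h1, h2]
  ring

noncomputable def Tfun (r₁ : ℕ) (q Q : ℝ) (α β : ℕ → ℕ) (m : ℕ) : ℝ :=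
  if m ≤ r₁ then Q * q ^ ((α m : ℤ) - (m : ℤ))
  else -(q ^ ((β (m - r₁) : ℤ) - ((m - r₁ : ℕ) : ℤ)))

lemma Tfun_pos (r₁ : ℕ) (q Q : ℝ) (hq0 : 0 < q) (hQ : 0 < Q) (α β : ℕ → ℕ) (m : ℕ)
    (hm : m ≤ r₁) : 0 < Tfun r₁ q Q α β m := by
  rw [Tfun, if_pos hm]
  positivity

lemma Tfun_neg (r₁ : ℕ) (q Q : ℝ) (hq0 : 0 < q) (α β : ℕ → ℕ) (m : ℕ)
    (hm : ¬ m ≤ r₁) : Tfun r₁ q Q α β m < 0 := by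
  rw [Tfun, if_neg hm]
  have : (0:ℝ) < q ^ ((β (m - r₁) : ℤ) - ((m - r₁ : ℕ) : ℤ)) := by positivity
  linarith

lemma Tfun_inj (r₁ r₂ : ℕ) (q Q : ℝ) (hq0 : 0 < q) (hq1 : q < 1) (hQ : 0 < Q)
    (α β : ℕ → ℕ) (hα : Antitone α) (hβ : Antitone β) :
    Set.InjOn (Tfun r₁ q Q α β) (Icc 1 (r₁ + r₂)) := by
  have hqne1 : q ≠ 1 := ne_of_lt hq1
  have hzinj := zpow_right_injective₀ hq0 hqne1
  intro m₁ h₁ m₂ h₂ heq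
  simp only [Finset.coe_Icc, Set.mem_Icc] at h₁ h₂
  by_contra hne
  by_cases hc₁ : m₁ ≤ r₁ <;> by_cases hc₂ : m₂ ≤ r₁
  · rw [Tfun, if_pos hc₁, Tfun, if_pos hc₂] at heq
    have hexp : ((α m₁ : ℤ) - m₁) = ((α m₂ : ℤ) - m₂) :=
      hzinj (mul_left_cancel₀ (ne_of_gt hQ) heq)
    rcases Nat.lt_or_ge m₁ m₂ with h | h
    · have := hα h.le; omega
    · have hlt : m₂ < m₁ := by omega
      have := hα hlt.le; omega
  · have := Tfun_pos r₁ q Q hq0 hQ α β m₁ hc₁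
    have := Tfun_neg r₁ q Q hq0 α β m₂ hc₂
    linarith [heq]
  · have := Tfun_pos r₁ q Q hq0 hQ α β m₂ hc₂
    have := Tfun_neg r₁ q Q hq0 α β m₁ hc₁
    linarith [heq]
  · rw [Tfun, if_neg hc₁, Tfun, if_neg hc₂] at heq
    have hexp : ((β (m₁ - r₁) : ℤ) - (m₁ - r₁ : ℕ)) = ((β (m₂ - r₁) : ℤ) - (m₂ - r₁ : ℕ)) :=
      hzinj (neg_injective heq)
    rcases Nat.lt_or_ge m₁ m₂ with h | h
    · have h' : m₁ - r₁ < m₂ - r₁ := by omega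
      have := hβ h'.le
      have h1 : (1:ℕ) ≤ m₁ - r₁ := by omega
      omega
    · have h' : m₂ - r₁ < m₁ - r₁ := by omega
      have := hβ h'.le
      omega

lemma Tfun_ne_zero (r₁ : ℕ) (q Q : ℝ) (hq0 : 0 < q) (hQ : 0 < Q) (α β : ℕ → ℕ) (m : ℕ) :
    Tfun r₁ q Q α β m ≠ 0 := by
  by_cases hm : m ≤ r₁
  · exact ne_of_gt (Tfun_pos r₁ q Q hq0 hQ α β m hm)
  · exact ne_of_lt (Tfun_neg r₁ q Q hq0 α β m hm)

lemma pairProd_ne_zero (s : Finset ℕ) (T : ℕ → ℝ) (hinj : Set.InjOn T s) :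
    pairProd s T ≠ 0 := by
  unfold pairProd
  rw [Finset.prod_ne_zero_iff]
  intro i hi
  rw [Finset.prod_ne_zero_iff]
  intro j hj
  by_cases hij : i < j
  · rw [if_pos hij]
    exact sub_ne_zero.mpr (fun h => (Nat.ne_of_lt hij) (hinj hi hj h))
  · rw [if_neg hij]; exact one_ne_zero

lemma weightW_eq (r₁ r₂ : ℕ) (α β : ℕ → ℕ) (q Q : ℝ)
    (hq0 : 0 < q) (hq1 : q < 1) (hQ : 0 < Q) :
    weightW r₁ r₂ α β q Q *
      pairProd (Icc 1 (r₁ + r₂)) (Tfun r₁ q Q (fun _ => 0) (fun _ => 0)) =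
    ((1 - q) / (1 - q ^ (r₁ + r₂))) ^ (sizeP r₁ α + sizeP r₂ β) *
      pairProd (Icc 1 (r₁ + r₂)) (Tfun r₁ q Q α β) := by
  have hq : q ≠ 0 := hq0.ne'
  have hA : pairProd (Icc 1 r₁) (Tfun r₁ q Q α β) =
      pairProd (Icc 1 r₁) (fun m => Q * q ^ ((α m : ℤ) - (m : ℤ))) := by
    apply pairProd_congr
    intro m hm
    simp only [Finset.mem_Icc] at hm
    rw [Tfun, if_pos hm.2]
  have hA0 : pairProd (Icc 1 r₁) (Tfun r₁ q Q (fun _ => 0) (fun _ => 0)) =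
      pairProd (Icc 1 r₁) (fun m => Q * q ^ (-(m : ℤ))) := by
    apply pairProd_congr
    intro m hm
    simp only [Finset.mem_Icc] at hm
    rw [Tfun, if_pos hm.2]
    norm_num
  have hB : pairProd (Icc (r₁ + 1) (r₁ + r₂)) (Tfun r₁ q Q α β) =
      pairProd (Icc 1 r₂) (fun m => (-1 : ℝ) * q ^ ((β m : ℤ) - (m : ℤ))) := by
    rw [pairProd_shift]
    apply pairProd_congr
    intro m hm
    simp only [Finset.mem_Icc] at hm
    rw [Tfun, if_neg (by omega)]
    have h : r₁ + m - r₁ = m := by omega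
    rw [h]; ring
  have hB0 : pairProd (Icc (r₁ + 1) (r₁ + r₂)) (Tfun r₁ q Q (fun _ => 0) (fun _ => 0)) =
      pairProd (Icc 1 r₂) (fun m => (-1 : ℝ) * q ^ (-(m : ℤ))) := by
    rw [pairProd_shift]
    apply pairProd_congr
    intro m hm
    simp only [Finset.mem_Icc] at hm
    rw [Tfun, if_neg (by omega)]
    have h : r₁ + m - r₁ = m := by omega
    rw [h]; norm_num
  have hX : ∏ i ∈ Icc 1 r₁, ∏ j ∈ Icc (r₁ + 1) (r₁ + r₂),
        (Tfun r₁ q Q α β i - Tfun r₁ q Q α β j) =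
      ∏ i ∈ Icc 1 r₁, ∏ j ∈ Icc 1 r₂,
        (Q * q ^ ((α i : ℤ) - (i : ℤ)) + q ^ ((β j : ℤ) - (j : ℤ))) := by
    apply Finset.prod_congr rfl
    intro i hi
    simp only [Finset.mem_Icc] at hi
    rw [prod_shift]
    apply Finset.prod_congr rfl
    intro j hj
    simp only [Finset.mem_Icc] at hj
    rw [Tfun, if_pos hi.2, Tfun, if_neg (by omega)]
    have h : r₁ + j - r₁ = j := by omega
    rw [h]; ring
  have hX0 : ∏ i ∈ Icc 1 r₁, ∏ j ∈ Icc (r₁ + 1) (r₁ + r₂),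
        (Tfun r₁ q Q (fun _ => 0) (fun _ => 0) i - Tfun r₁ q Q (fun _ => 0) (fun _ => 0) j) =
      ∏ i ∈ Icc 1 r₁, ∏ j ∈ Icc 1 r₂,
        (Q * q ^ (-(i : ℤ)) + q ^ (-(j : ℤ))) := by
    apply Finset.prod_congr rfl
    intro i hi
    simp only [Finset.mem_Icc] at hi
    rw [prod_shift]
    apply Finset.prod_congr rfl
    intro j hj
    simp only [Finset.mem_Icc] at hj
    rw [Tfun, if_pos hi.2, Tfun, if_neg (by omega)]
    have h : r₁ + j - r₁ = j := by omega
    rw [h]; norm_num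
  have hXr : ∏ i ∈ Icc 1 r₁, ∏ j ∈ Icc 1 r₂,
        (Q * q ^ ((α i : ℤ) - (i : ℤ)) + q ^ ((β j : ℤ) - (j : ℤ))) =
      (∏ i ∈ Icc 1 r₁, ∏ j ∈ Icc 1 r₂,
        (Q * q ^ ((α i : ℤ) - (i : ℤ)) + q ^ ((β j : ℤ) - (j : ℤ))) /
          (Q * q ^ (-(i : ℤ)) + q ^ (-(j : ℤ)))) *
      ∏ i ∈ Icc 1 r₁, ∏ j ∈ Icc 1 r₂, (Q * q ^ (-(i : ℤ)) + q ^ (-(j : ℤ))) := by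
    rw [← Finset.prod_mul_distrib]
    apply Finset.prod_congr rfl
    intro i _
    rw [← Finset.prod_mul_distrib]
    apply Finset.prod_congr rfl
    intro j _
    have hden : Q * q ^ (-(i : ℤ)) + q ^ (-(j : ℤ)) ≠ 0 := by positivity
    rw [div_mul_cancel₀ _ hden]
  rw [pairProd_split r₁ r₂ (Tfun r₁ q Q α β),
    pairProd_split r₁ r₂ (Tfun r₁ q Q (fun _ => 0) (fun _ => 0)),
    hA, hA0, hB, hB0, hX, hX0, hXr,
    block_lemma r₁ α q Q hq0 hq1, block_lemma r₂ β q (-1) hq0 hq1]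
  rw [weightW, pow_add]
  ring

lemma sizeP_update (r k : ℕ) (α : ℕ → ℕ) (hk : k ∈ Icc 1 r) :
    sizeP r (Function.update α k (α k + 1)) = sizeP r α + 1 := by
  unfold sizeP
  rw [Finset.sum_update_of_mem hk, Finset.sdiff_singleton_eq_erase,
    ← Finset.add_sum_erase _ α hk]
  ring

lemma Tfun_update_A (r₁ : ℕ) (q Q : ℝ) (hq : q ≠ 0) (α β : ℕ → ℕ) (k : ℕ)
    (hk2 : k ≤ r₁) :
    Tfun r₁ q Q (Function.update α k (α k + 1)) β =
      Function.update (Tfun r₁ q Q α β) k (q * Tfun r₁ q Q α β k) := by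
  funext m
  by_cases hm : m = k
  · subst hm
    rw [Function.update_self, Tfun, Tfun, if_pos hk2, if_pos hk2, Function.update_self]
    have h : ((α m + 1 : ℕ) : ℤ) - (m : ℤ) = 1 + ((α m : ℤ) - (m : ℤ)) := by push_cast; ring
    rw [h, zpow_add₀ hq, zpow_one]
    ring
  · rw [Function.update_of_ne hm]
    simp only [Tfun, Function.update_of_ne hm]

lemma Tfun_update_B (r₁ : ℕ) (q Q : ℝ) (hq : q ≠ 0) (α β : ℕ → ℕ) (k : ℕ)
    (hk1 : 1 ≤ k) :
    Tfun r₁ q Q α (Function.update β k (β k + 1)) =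
      Function.update (Tfun r₁ q Q α β) (r₁ + k) (q * Tfun r₁ q Q α β (r₁ + k)) := by
  funext m
  by_cases hm : m = r₁ + k
  · subst hm
    rw [Function.update_self, Tfun, Tfun, if_neg (by omega), if_neg (by omega)]
    have h : r₁ + k - r₁ = k := by omega
    rw [h, Function.update_self]
    have h2 : ((β k + 1 : ℕ) : ℤ) - (k : ℤ) = 1 + ((β k : ℤ) - (k : ℤ)) := by push_cast; ring
    rw [h2, zpow_add₀ hq, zpow_one]
    ring
  · rw [Function.update_of_ne hm]
    simp only [Tfun]
    by_cases hmr : m ≤ r₁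
    · rw [if_pos hmr, if_pos hmr]
    · rw [if_neg hmr, if_neg hmr, Function.update_of_ne (by omega)]

/-- Let `r₁, r₂ ≥ 1`, `α` a partition with at most `r₁` parts and
`β` a partition with at most `r₂` parts. For all real `0 < q < 1` and `Q > 0`,
`W_{(α,β)}(q,Q) = Σ W_{(γ,η)}(q,Q)`, the sum running over all pairs `(γ,η)` obtained
from `(α,β)` by adding exactly one box, with `γ` having at most `r₁` parts and `η`
at most `r₂` parts.  A box can be added to row `k` (`1 ≤ k ≤ r₁`, resp. `r₂`) of a
partition exactly when `k = 1` or the `(k−1)`-st part strictly exceeds the `k`-th. -/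
theorem weightW_branching (r₁ r₂ : ℕ) (hr₁ : 1 ≤ r₁) (hr₂ : 1 ≤ r₂)
    (α β : ℕ → ℕ) (hα : Antitone α) (hα0 : ∀ i, r₁ < i → α i = 0)
    (hβ : Antitone β) (hβ0 : ∀ i, r₂ < i → β i = 0)
    (q Q : ℝ) (hq0 : 0 < q) (hq1 : q < 1) (hQ : 0 < Q) :
    weightW r₁ r₂ α β q Q =
      (∑ k ∈ Icc 1 r₁, if k = 1 ∨ α k < α (k - 1) then
          weightW r₁ r₂ (Function.update α k (α k + 1)) β q Q else 0) +
      ∑ k ∈ Icc 1 r₂, if k = 1 ∨ β k < β (k - 1) then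
          weightW r₁ r₂ α (Function.update β k (β k + 1)) q Q else 0 := by
  have hq : q ≠ 0 := hq0.ne'
  have hq1' : q ≠ 1 := ne_of_lt hq1
  have hinj : Set.InjOn (Tfun r₁ q Q α β) (Icc 1 (r₁ + r₂)) :=
    Tfun_inj r₁ r₂ q Q hq0 hq1 hQ α β hα hβ
  have hinj0 : Set.InjOn (Tfun r₁ q Q (fun _ => 0) (fun _ => 0)) (Icc 1 (r₁ + r₂)) :=
    Tfun_inj r₁ r₂ q Q hq0 hq1 hQ _ _ (antitone_const) (antitone_const)
  have hG0 : pairProd (Icc 1 (r₁ + r₂)) (Tfun r₁ q Q (fun _ => 0) (fun _ => 0)) ≠ 0 :=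
    pairProd_ne_zero _ _ hinj0
  have hG : pairProd (Icc 1 (r₁ + r₂)) (Tfun r₁ q Q α β) ≠ 0 :=
    pairProd_ne_zero _ _ hinj
  have hqr : (1 : ℝ) - q ^ (r₁ + r₂) ≠ 0 := by
    have : q ^ (r₁ + r₂) < 1 := pow_lt_one₀ hq0.le hq1 (by omega)
    linarith
  have hqq : (1 : ℝ) - q ≠ 0 := by linarith
  have hc : (1 - q) / (1 - q ^ (r₁ + r₂)) ≠ 0 := div_ne_zero hqq hqr
  -- the main weight in product form
  have hW := weightW_eq r₁ r₂ α β q Q hq0 hq1 hQ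
  -- terms of the first sum
  have key1 : ∀ k ∈ Icc 1 r₁, weightW r₁ r₂ (Function.update α k (α k + 1)) β q Q *
      pairProd (Icc 1 (r₁ + r₂)) (Tfun r₁ q Q (fun _ => 0) (fun _ => 0)) =
      ((1 - q) / (1 - q ^ (r₁ + r₂))) ^ (sizeP r₁ α + sizeP r₂ β + 1) *
        ((∏ j ∈ (Icc 1 (r₁ + r₂)).erase k,
          (q * Tfun r₁ q Q α β k - Tfun r₁ q Q α β j) / (Tfun r₁ q Q α β k - Tfun r₁ q Q α β j)) *
          pairProd (Icc 1 (r₁ + r₂)) (Tfun r₁ q Q α β)) := by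
    intro k hk
    simp only [Finset.mem_Icc] at hk
    have hks : k ∈ Icc 1 (r₁ + r₂) := by simp only [Finset.mem_Icc]; omega
    have h := weightW_eq r₁ r₂ (Function.update α k (α k + 1)) β q Q hq0 hq1 hQ
    rw [sizeP_update r₁ k α (by simp only [Finset.mem_Icc]; omega),
      Tfun_update_A r₁ q Q hq α β k hk.2,
      pairProd_update_div (Icc 1 (r₁ + r₂)) (Tfun r₁ q Q α β) k hks (q * Tfun r₁ q Q α β k) hinj,
      show sizeP r₁ α + 1 + sizeP r₂ β = sizeP r₁ α + sizeP r₂ β + 1 from by ring] at h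
    exact h
  have key2 : ∀ k ∈ Icc 1 r₂, weightW r₁ r₂ α (Function.update β k (β k + 1)) q Q *
      pairProd (Icc 1 (r₁ + r₂)) (Tfun r₁ q Q (fun _ => 0) (fun _ => 0)) =
      ((1 - q) / (1 - q ^ (r₁ + r₂))) ^ (sizeP r₁ α + sizeP r₂ β + 1) *
        ((∏ j ∈ (Icc 1 (r₁ + r₂)).erase (r₁ + k),
          (q * Tfun r₁ q Q α β (r₁ + k) - Tfun r₁ q Q α β j) /
            (Tfun r₁ q Q α β (r₁ + k) - Tfun r₁ q Q α β j)) *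
          pairProd (Icc 1 (r₁ + r₂)) (Tfun r₁ q Q α β)) := by
    intro k hk
    simp only [Finset.mem_Icc] at hk
    have hks : r₁ + k ∈ Icc 1 (r₁ + r₂) := by simp only [Finset.mem_Icc]; omega
    have h := weightW_eq r₁ r₂ α (Function.update β k (β k + 1)) q Q hq0 hq1 hQ
    rw [sizeP_update r₂ k β (by simp only [Finset.mem_Icc]; omega),
      Tfun_update_B r₁ q Q hq α β k hk.1,
      pairProd_update_div (Icc 1 (r₁ + r₂)) (Tfun r₁ q Q α β) (r₁ + k) hks
        (q * Tfun r₁ q Q α β (r₁ + k)) hinj,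
      show sizeP r₁ α + (sizeP r₂ β + 1) = sizeP r₁ α + sizeP r₂ β + 1 from by ring] at h
    exact h
  -- vanishing of forbidden terms
  have vanish1 : ∀ k ∈ Icc 1 r₁, ¬(k = 1 ∨ α k < α (k - 1)) →
      ∏ j ∈ (Icc 1 (r₁ + r₂)).erase k,
        (q * Tfun r₁ q Q α β k - Tfun r₁ q Q α β j) /
          (Tfun r₁ q Q α β k - Tfun r₁ q Q α β j) = 0 := by
    intro k hk hcond
    push_neg at hcond
    simp only [Finset.mem_Icc] at hk
    have hk2 : 2 ≤ k := by omega
    have heq : α (k - 1) = α k := le_antisymm hcond.2 (hα (by omega))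
    apply Finset.prod_eq_zero (i := k - 1)
    · simp only [Finset.mem_erase, Finset.mem_Icc]
      omega
    · rw [div_eq_zero_iff]
      left
      rw [Tfun, Tfun, if_pos hk.2, if_pos (by omega : k - 1 ≤ r₁), heq]
      have h : ((α k : ℤ)) - ((k - 1 : ℕ) : ℤ) = 1 + ((α k : ℤ) - (k : ℤ)) := by
        have : ((k - 1 : ℕ) : ℤ) = (k : ℤ) - 1 := by omega
        rw [this]; ring
      rw [h, zpow_add₀ hq, zpow_one]
      ring
  have vanish2 : ∀ k ∈ Icc 1 r₂, ¬(k = 1 ∨ β k < β (k - 1)) →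
      ∏ j ∈ (Icc 1 (r₁ + r₂)).erase (r₁ + k),
        (q * Tfun r₁ q Q α β (r₁ + k) - Tfun r₁ q Q α β j) /
          (Tfun r₁ q Q α β (r₁ + k) - Tfun r₁ q Q α β j) = 0 := by
    intro k hk hcond
    push_neg at hcond
    simp only [Finset.mem_Icc] at hk
    have hk2 : 2 ≤ k := by omega
    have heq : β (k - 1) = β k := le_antisymm hcond.2 (hβ (by omega))
    apply Finset.prod_eq_zero (i := r₁ + k - 1)
    · simp only [Finset.mem_erase, Finset.mem_Icc]
      omega
    · rw [div_eq_zero_iff]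
      left
      rw [Tfun, Tfun, if_neg (by omega), if_neg (by omega)]
      have h1 : r₁ + k - r₁ = k := by omega
      have h2 : r₁ + k - 1 - r₁ = k - 1 := by omega
      rw [h1, h2, heq]
      have h : ((β k : ℤ)) - ((k - 1 : ℕ) : ℤ) = 1 + ((β k : ℤ) - (k : ℤ)) := by
        have : ((k - 1 : ℕ) : ℤ) = (k : ℤ) - 1 := by omega
        rw [this]; ring
      rw [h, zpow_add₀ hq, zpow_one]
      ring
  -- pointwise forms of the summands, multiplied by the zero-partition pairProd
  have hterm1 : ∀ k ∈ Icc 1 r₁,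
      (if k = 1 ∨ α k < α (k - 1) then
        weightW r₁ r₂ (Function.update α k (α k + 1)) β q Q else 0) *
        pairProd (Icc 1 (r₁ + r₂)) (Tfun r₁ q Q (fun _ => 0) (fun _ => 0)) =
      (((1 - q) / (1 - q ^ (r₁ + r₂))) ^ (sizeP r₁ α + sizeP r₂ β + 1) *
        pairProd (Icc 1 (r₁ + r₂)) (Tfun r₁ q Q α β)) *
        ∏ j ∈ (Icc 1 (r₁ + r₂)).erase k,
          (q * Tfun r₁ q Q α β k - Tfun r₁ q Q α β j) /
            (Tfun r₁ q Q α β k - Tfun r₁ q Q α β j) := by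
    intro k hk
    by_cases hcond : k = 1 ∨ α k < α (k - 1)
    · rw [if_pos hcond, key1 k hk]
      ring
    · rw [if_neg hcond, vanish1 k hk hcond, zero_mul, mul_zero]
  have hterm2 : ∀ k ∈ Icc 1 r₂,
      (if k = 1 ∨ β k < β (k - 1) then
        weightW r₁ r₂ α (Function.update β k (β k + 1)) q Q else 0) *
        pairProd (Icc 1 (r₁ + r₂)) (Tfun r₁ q Q (fun _ => 0) (fun _ => 0)) =
      (((1 - q) / (1 - q ^ (r₁ + r₂))) ^ (sizeP r₁ α + sizeP r₂ β + 1) *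
        pairProd (Icc 1 (r₁ + r₂)) (Tfun r₁ q Q α β)) *
        ∏ j ∈ (Icc 1 (r₁ + r₂)).erase (r₁ + k),
          (q * Tfun r₁ q Q α β (r₁ + k) - Tfun r₁ q Q α β j) /
            (Tfun r₁ q Q α β (r₁ + k) - Tfun r₁ q Q α β j) := by
    intro k hk
    by_cases hcond : k = 1 ∨ β k < β (k - 1)
    · rw [if_pos hcond, key2 k hk]
      ring
    · rw [if_neg hcond, vanish2 k hk hcond, zero_mul, mul_zero]
  apply mul_right_cancel₀ hG0
  rw [hW, add_mul, Finset.sum_mul, Finset.sum_mul,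
    Finset.sum_congr rfl hterm1, Finset.sum_congr rfl hterm2,
    ← Finset.mul_sum, ← Finset.mul_sum, ← mul_add]
  have hs2 : (∑ k ∈ Icc 1 r₂, ∏ j ∈ (Icc 1 (r₁ + r₂)).erase (r₁ + k),
        (q * Tfun r₁ q Q α β (r₁ + k) - Tfun r₁ q Q α β j) /
          (Tfun r₁ q Q α β (r₁ + k) - Tfun r₁ q Q α β j)) =
      ∑ m ∈ Icc (r₁ + 1) (r₁ + r₂), ∏ j ∈ (Icc 1 (r₁ + r₂)).erase m,
        (q * Tfun r₁ q Q α β m - Tfun r₁ q Q α β j) /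
          (Tfun r₁ q Q α β m - Tfun r₁ q Q α β j) :=
    (sum_shift r₁ r₂ fun m => ∏ j ∈ (Icc 1 (r₁ + r₂)).erase m,
      (q * Tfun r₁ q Q α β m - Tfun r₁ q Q α β j) /
        (Tfun r₁ q Q α β m - Tfun r₁ q Q α β j)).symm
  rw [hs2, ← Finset.sum_union (Icc_disj r₁ r₂), ← Icc_split r₁ r₂,
    sum_prod_ratio q hq1' _ _ hinj (fun m _ => Tfun_ne_zero r₁ q Q hq0 hQ α β m),
    Nat.card_Icc, show r₁ + r₂ + 1 - 1 = r₁ + r₂ from by omega, pow_succ]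
  field_simp
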